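/- arXiv:1209.4242 — 4 statements merged into one kernel-verified Lean document; each statement's English description precedes it below -/
import Mathlib

section
/- For every integer k ≥ 1, the following identity holds in the field ℚ(q₁,q₂): (1−q₁q₂)^k · ∏_{1≤i≠j≤k} (q₁^{−i} − q₁q₂·q₁^{−j})/(q₁^{−i} − q₂·q₁^{−j}) · ∏_{i=1}^{k} (q₁^{i−1} − q₂) = q₁^{k(k−1)/2} · (1−q₂)^k · ∏_{i=1}^{k} (1 − q₁^{i} q₂). -/
/-!
With `u d = 1 - q₁ ^ d * q₂`, the factor indexed by `(i, j)` is `u (i - j + 1) / u (i - j)`, so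
over the full square `[1, k]²` the product telescopes in `j` to `∏ᵢ u i / u (i - k)`; the diagonal
contributes `(u 1 / u 0) ^ k`. Also `q₁ ^ (i - 1) - q₂ = q₁ ^ (i - 1) · u (1 - i)`, and
`i ↦ k + 1 - i` turns `∏ᵢ u (1 - i)` into `∏ᵢ u (i - k)`, which cancels. The only input from
`ℚ(q₁, q₂)` is that no `q₁ ^ d * q₂` equals `1`.
-/

open MvPolynomial

noncomputable section

/-- The field `F = ℚ(q₁,q₂)` of rational functions in two variables over `ℚ`. -/
abbrev F : Type := FractionRing (MvPolynomial (Fin 2) ℚ)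

/-- The variable `q₁ ∈ F`. -/
def q1 : F := algebraMap (MvPolynomial (Fin 2) ℚ) F (X 0)

/-- The variable `q₂ ∈ F`. -/
def q2 : F := algebraMap (MvPolynomial (Fin 2) ℚ) F (X 1)

namespace Finset

theorem prod_filter_ne_mul_pow_card {M : Type*} [CommMonoid M] (s : Finset ℕ) (f : ℤ → M) :
    (∏ p ∈ (s ×ˢ s).filter (fun p => p.1 ≠ p.2), f (p.1 - p.2)) * f 0 ^ #s =
      ∏ p ∈ s ×ˢ s, f (p.1 - p.2) := by
  rw [← prod_filter_mul_prod_filter_not (s ×ˢ s) (fun p => p.1 ≠ p.2)]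
  simp_rw [not_not, ← diag_eq_filter, prod_diag, sub_self, prod_const]

theorem prod_Icc_sub_reflect {M : Type*} [CommMonoid M] (f : ℤ → M) (k : ℕ) :
    ∏ i ∈ Icc 1 k, f (i - k) = ∏ i ∈ Icc 1 k, f (1 - i) := by
  refine prod_nbij' (fun i => k + 1 - i) (fun i => k + 1 - i) ?_ ?_ ?_ ?_ ?_ <;>
    intro i hi <;> simp only [mem_Icc] at hi ⊢ <;> try omega
  congr 1; omega

theorem prod_Icc_pow_sub_one {M : Type*} [CommMonoid M] (a : M) (k : ℕ) :
    ∏ i ∈ Icc 1 k, a ^ (i - 1) = a ^ (k * (k - 1) / 2) := by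
  rw [prod_pow_eq_pow_sum, ← sum_range_id, ← Ico_add_one_right_eq_Icc, sum_Ico_eq_sum_range]
  simp only [Nat.add_sub_cancel, Nat.add_sub_cancel_left]

theorem prod_Icc_div_telescope {G : Type*} [CommGroupWithZero G] (f : ℤ → G)
    (hf : ∀ d, f d ≠ 0) (i : ℤ) (k : ℕ) :
    ∏ j ∈ Icc 1 k, f (i - j + 1) / f (i - j) = f i / f (i - k) := by
  induction k with
  | zero => simp [div_self (hf i)]
  | succ k ih =>
    rw [prod_Icc_succ_top (Nat.le_add_left 1 k), ih]
    push_cast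
    rw [sub_add_eq_sub_sub, sub_add_cancel, div_mul_div_cancel₀ (hf _)]

end Finset

section

variable {K : Type*} [Field K] {q t : K}

theorem zpow_neg_sub_div_zpow_neg_sub (hq : q ≠ 0) (i j : ℤ) :
    (q ^ (-i) - q * t * q ^ (-j)) / (q ^ (-i) - t * q ^ (-j)) =
      (1 - q ^ (i - j + 1) * t) / (1 - q ^ (i - j) * t) := by
  rw [← mul_div_mul_left _ _ (zpow_ne_zero i hq)]
  congr 1 <;> simp only [zpow_add₀ hq, zpow_sub₀ hq, zpow_neg, zpow_one] <;> field_simp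

theorem zpow_sub_eq_zpow_mul_one_sub (hq : q ≠ 0) (n : ℤ) :
    q ^ n - t = q ^ n * (1 - q ^ (-n) * t) := by
  rw [mul_sub, ← mul_assoc, ← zpow_add₀ hq, add_neg_cancel, zpow_zero, mul_one, one_mul]

theorem evaluation_identity_of_zpow_mul_ne_one (hq : q ≠ 0) (ht : ∀ d : ℤ, q ^ d * t ≠ 1)
    (k : ℕ) :
    (1 - q * t) ^ k *
      (∏ p ∈ (Finset.Icc 1 k ×ˢ Finset.Icc 1 k).filter (fun p => p.1 ≠ p.2),
        (q ^ (-(p.1 : ℤ)) - q * t * q ^ (-(p.2 : ℤ))) /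
          (q ^ (-(p.1 : ℤ)) - t * q ^ (-(p.2 : ℤ)))) *
      ∏ i ∈ Finset.Icc 1 k, (q ^ (i - 1) - t)
    = q ^ (k * (k - 1) / 2) * (1 - t) ^ k * ∏ i ∈ Finset.Icc 1 k, (1 - q ^ i * t) := by
  set s := Finset.Icc 1 k
  set u : ℤ → K := fun d => 1 - q ^ d * t
  have hu : ∀ d, u d ≠ 0 := fun d => sub_ne_zero.mpr (ht d).symm
  have h_offDiag : (∏ p ∈ (s ×ˢ s).filter (fun p => p.1 ≠ p.2),
        (q ^ (-(p.1 : ℤ)) - q * t * q ^ (-(p.2 : ℤ))) /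
          (q ^ (-(p.1 : ℤ)) - t * q ^ (-(p.2 : ℤ)))) * (u 1 / u 0) ^ k =
      ∏ i ∈ s, u i / u (i - k) := by
    have h := Finset.prod_filter_ne_mul_pow_card s (fun d => u (d + 1) / u d)
    rw [zero_add, Finset.prod_product, Nat.card_Icc, add_tsub_cancel_right] at h
    simp_rw [zpow_neg_sub_div_zpow_neg_sub hq, ← Finset.prod_Icc_div_telescope u hu]
    exact h
  have h_last :
      ∏ i ∈ s, (q ^ (i - 1) - t) = q ^ (k * (k - 1) / 2) * ∏ i ∈ s, u (i - k) := by
    rw [Finset.prod_Icc_sub_reflect u, ← Finset.prod_Icc_pow_sub_one, ← Finset.prod_mul_distrib]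
    refine Finset.prod_congr rfl fun i hi => ?_
    have hi : 1 ≤ i := (Finset.mem_Icc.mp hi).1
    rw [← zpow_natCast, zpow_sub_eq_zpow_mul_one_sub hq, Nat.cast_sub hi, Nat.cast_one, neg_sub]
  have h_one : 1 - q * t = u 1 := by simp [u]
  have h_zero : 1 - t = u 0 := by simp [u]
  have h_nat : ∏ i ∈ s, (1 - q ^ i * t) = ∏ i ∈ s, u i :=
    Finset.prod_congr rfl fun i _ => by simp [u]
  have hR : ∏ i ∈ s, u (i - k) ≠ 0 := Finset.prod_ne_zero_iff.mpr fun i _ => hu _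
  rw [Finset.prod_div_distrib (s := s), ← eq_div_iff (pow_ne_zero _ (div_ne_zero (hu 1) (hu 0)))]
    at h_offDiag
  rw [h_offDiag, h_last, h_one, h_zero, h_nat, div_pow]
  field_simp [hu 0, hu 1, hR]

end

theorem q1_ne_zero : q1 ≠ 0 := by
  simp [q1]

theorem q1_zpow_mul_q2_ne_one (d : ℤ) : q1 ^ d * q2 ≠ 1 := by
  intro h
  obtain ⟨a, b, rfl⟩ : ∃ a b : ℕ, d = a - b := ⟨d.toNat, (-d).toNat, by omega⟩
  have h_nat : q1 ^ a * q2 = q1 ^ b := by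
    rw [← mul_one (q1 ^ b), ← h, ← mul_assoc, ← zpow_natCast, ← zpow_natCast,
      ← zpow_add₀ q1_ne_zero, add_sub_cancel]
  have h_poly : (X 0 : MvPolynomial (Fin 2) ℚ) ^ a * X 1 = X 0 ^ b :=
    IsFractionRing.injective (MvPolynomial (Fin 2) ℚ) F (by simpa [q1, q2] using h_nat)
  have h_eval := congrArg (eval ![1, 0]) h_poly
  simp at h_eval

theorem evaluation_identity_Ak_general (k : ℕ) :
    (1 - q1 * q2) ^ k *
      (∏ p ∈ (Finset.Icc 1 k ×ˢ Finset.Icc 1 k).filter (fun p => p.1 ≠ p.2),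
        (q1 ^ (-(p.1 : ℤ)) - q1 * q2 * q1 ^ (-(p.2 : ℤ))) /
          (q1 ^ (-(p.1 : ℤ)) - q2 * q1 ^ (-(p.2 : ℤ)))) *
      ∏ i ∈ Finset.Icc 1 k, (q1 ^ (i - 1) - q2)
    = q1 ^ (k * (k - 1) / 2) * (1 - q2) ^ k *
        ∏ i ∈ Finset.Icc 1 k, (1 - q1 ^ i * q2) :=
  evaluation_identity_of_zpow_mul_ne_one q1_ne_zero q1_zpow_mul_q2_ne_one k

/-- For every `k ≥ 1`, in `ℚ(q₁,q₂)`: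
`(1−q₁q₂)^k · ∏_{1≤i≠j≤k} (q₁^{−i} − q₁q₂·q₁^{−j})/(q₁^{−i} − q₂·q₁^{−j})
  · ∏_{i=1}^{k} (q₁^{i−1} − q₂)
  = q₁^{k(k−1)/2} · (1−q₂)^k · ∏_{i=1}^{k} (1 − q₁^{i} q₂)`. -/
theorem evaluation_identity_Ak (k : ℕ) (hk : 1 ≤ k) :
    (1 - q1 * q2) ^ k *
      (∏ p ∈ (Finset.Icc 1 k ×ˢ Finset.Icc 1 k).filter (fun p => p.1 ≠ p.2),
        (q1 ^ (-(p.1 : ℤ)) - q1 * q2 * q1 ^ (-(p.2 : ℤ))) /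
          (q1 ^ (-(p.1 : ℤ)) - q2 * q1 ^ (-(p.2 : ℤ)))) *
      ∏ i ∈ Finset.Icc 1 k, (q1 ^ (i - 1) - q2)
    = q1 ^ (k * (k - 1) / 2) * (1 - q2) ^ k *
        ∏ i ∈ Finset.Icc 1 k, (1 - q1 ^ i * q2) :=
  evaluation_identity_Ak_general k
end
end

section
/- For every Young diagram λ, the following identity holds in the polynomial ring ℤ[q₁,q₂]: 1 − (1−q₁)(1−q₂)·Σ_{(i,j)∈λ} q₁^{i} q₂^{j} = Σ_{(i,j) addable for λ} q₁^{i} q₂^{j} − Σ_{(i,j) removable from λ} q₁^{i+1} q₂^{j+1}. -/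
open MvPolynomial

noncomputable section

/-- A cell `c ∉ μ` is addable for the Young diagram `μ` if inserting it yields again
a Young diagram (i.e. a lower set); these index the inner corners of `μ`. -/
def YoungDiagram.IsAddable (μ : YoungDiagram) (c : ℕ × ℕ) : Prop :=
  c ∉ μ ∧ IsLowerSet (insert c (μ.cells : Set (ℕ × ℕ)))

/-- A cell `c ∈ μ` is removable from the Young diagram `μ` if deleting it yields again
a Young diagram (i.e. a lower set). -/
def YoungDiagram.IsRemovable (μ : YoungDiagram) (c : ℕ × ℕ) : Prop :=
  c ∈ μ ∧ IsLowerSet ((μ.cells : Set (ℕ × ℕ)) \ {c})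

open scoped Classical in
/-- The (finite) set of addable cells of a Young diagram `μ`; every addable cell
`(i,j)` satisfies `i,j ≤ |μ|`, so the bounded filter captures all of them. -/
def YoungDiagram.addables (μ : YoungDiagram) : Finset (ℕ × ℕ) :=
  (Finset.range (μ.cells.card + 1) ×ˢ Finset.range (μ.cells.card + 1)).filter
    (fun c => μ.IsAddable c)

open scoped Classical in
/-- The set of removable cells of a Young diagram `μ`. -/
def YoungDiagram.removables (μ : YoungDiagram) : Finset (ℕ × ℕ) :=
  μ.cells.filter (fun c => μ.IsRemovable c)

lemma isAddable_iff (μ : YoungDiagram) (i j : ℕ) :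
    μ.IsAddable (i, j) ↔ j = μ.rowLen i ∧ (i = 0 ∨ j < μ.rowLen (i - 1)) := by
  constructor
  · rintro ⟨h1, h2⟩
    have hge : μ.rowLen i ≤ j := by
      by_contra h
      exact h1 (YoungDiagram.mem_iff_lt_rowLen.2 (lt_of_not_ge h))
    have hle : j ≤ μ.rowLen i := by
      by_contra h
      push_neg at h
      have hmem : ((i, μ.rowLen i) : ℕ × ℕ) ∈ insert ((i, j) : ℕ × ℕ) (μ.cells : Set (ℕ × ℕ)) :=
        h2 (Prod.mk_le_mk.2 ⟨le_refl i, le_of_lt h⟩) (Set.mem_insert _ _)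
      rcases hmem with hmem | hmem
      · exact absurd (Prod.mk.injEq .. ▸ hmem) (by simp [h.ne])
      · have : (i, μ.rowLen i) ∈ μ := by simpa using hmem
        exact lt_irrefl _ (YoungDiagram.mem_iff_lt_rowLen.1 this)
    refine ⟨le_antisymm hle hge, ?_⟩
    rcases Nat.eq_zero_or_pos i with hi | hi
    · exact Or.inl hi
    · right
      have hmem : ((i - 1, j) : ℕ × ℕ) ∈ insert ((i, j) : ℕ × ℕ) (μ.cells : Set (ℕ × ℕ)) :=
        h2 (Prod.mk_le_mk.2 ⟨Nat.sub_le i 1, le_refl j⟩) (Set.mem_insert _ _)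
      rcases hmem with hmem | hmem
      · exfalso
        have := (Prod.ext_iff.1 hmem).1
        omega
      · exact YoungDiagram.mem_iff_lt_rowLen.1 (by simpa using hmem)
  · rintro ⟨hj, hcorner⟩
    constructor
    · rw [YoungDiagram.mem_iff_lt_rowLen]; omega
    · rintro ⟨p, q⟩ ⟨a, b⟩ hxy hy
      obtain ⟨ha, hb⟩ := Prod.mk_le_mk.1 hxy
      rcases hy with hy | hy
      · simp only [Set.mem_singleton_iff, Prod.ext_iff] at hy
        obtain ⟨hp, hq⟩ : p = i ∧ q = j := by simpa using hy
        by_cases hab : a = i ∧ b = j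
        · left; simp [hab.1, hab.2]
        · right
          have hmem : ((a, b) : ℕ × ℕ) ∈ μ := by
            rw [YoungDiagram.mem_iff_lt_rowLen]
            rcases Nat.lt_or_ge a i with ha' | ha'
            · have h2 : μ.rowLen (i - 1) ≤ μ.rowLen a := μ.rowLen_anti a (i - 1) (by omega)
              have h3 : μ.rowLen i ≤ μ.rowLen a := μ.rowLen_anti a i (by omega)
              rcases hcorner with h0 | hc
              · omega
              · omega
            · have hai : a = i := by omega
              have hbj : b ≠ j := fun h => hab ⟨hai, h⟩
              subst hai
              omega
          simpa using hmem
      · right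
        have : ((p, q) : ℕ × ℕ) ∈ μ := by simpa using hy
        have := μ.isLowerSet hxy this
        simpa using this

lemma isRemovable_iff (μ : YoungDiagram) (i j : ℕ) :
    μ.IsRemovable (i, j) ↔ j + 1 = μ.rowLen i ∧ μ.rowLen (i + 1) ≤ j := by
  constructor
  · rintro ⟨h1, h2⟩
    have hj : j < μ.rowLen i := YoungDiagram.mem_iff_lt_rowLen.1 h1
    constructor
    · by_contra h
      have hmem : ((i, j + 1) : ℕ × ℕ) ∈ μ := YoungDiagram.mem_iff_lt_rowLen.2 (by omega)
      have : ((i, j) : ℕ × ℕ) ∈ ((μ.cells : Set (ℕ × ℕ)) \ {(i, j)}) := by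
        apply h2 (Prod.mk_le_mk.2 ⟨le_refl i, Nat.le_succ j⟩)
        exact ⟨by simpa using hmem, by simp⟩
      exact this.2 rfl
    · by_contra h
      have hmem : ((i + 1, j) : ℕ × ℕ) ∈ μ := YoungDiagram.mem_iff_lt_rowLen.2 (by omega)
      have : ((i, j) : ℕ × ℕ) ∈ ((μ.cells : Set (ℕ × ℕ)) \ {(i, j)}) := by
        apply h2 (Prod.mk_le_mk.2 ⟨Nat.le_succ i, le_refl j⟩)
        exact ⟨by simpa using hmem, by simp⟩
      exact this.2 rfl
  · rintro ⟨hj, hnext⟩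
    have h1 : ((i, j) : ℕ × ℕ) ∈ μ := YoungDiagram.mem_iff_lt_rowLen.2 (by omega)
    refine ⟨h1, ?_⟩
    rintro ⟨a, b⟩ ⟨p, q⟩ hxy ⟨hy1, hy2⟩
    have hy : ((a, b) : ℕ × ℕ) ∈ μ := by simpa using hy1
    constructor
    · exact by simpa using μ.isLowerSet hxy hy
    · simp only [Set.mem_singleton_iff, Prod.ext_iff] at hy2 ⊢
      rintro ⟨rfl, rfl⟩
      obtain ⟨ha, hb⟩ := Prod.mk_le_mk.1 hxy
      have hbl : b < μ.rowLen a := YoungDiagram.mem_iff_lt_rowLen.1 hy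
      rcases eq_or_lt_of_le ha with rfl | ha'
      · have : b = q := by omega
        exact hy2 ⟨rfl, by omega⟩
      · have : μ.rowLen a ≤ μ.rowLen (p + 1) := μ.rowLen_anti _ _ (by omega)
        omega

lemma rowLen_le_card (μ : YoungDiagram) (i : ℕ) : μ.rowLen i ≤ μ.cells.card := by
  rw [YoungDiagram.rowLen_eq_card]
  exact Finset.card_le_card (fun c hc => (YoungDiagram.mem_cells _).2 ((YoungDiagram.mem_row_iff.1 hc).1))

lemma colLen_le_card (μ : YoungDiagram) (j : ℕ) : μ.colLen j ≤ μ.cells.card := by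
  rw [YoungDiagram.colLen_eq_card]
  exact Finset.card_le_card (fun c hc => (YoungDiagram.mem_cells _).2 ((YoungDiagram.mem_col_iff.1 hc).1))

lemma rowLen_eq_zero_iff (μ : YoungDiagram) (i : ℕ) : μ.rowLen i = 0 ↔ μ.colLen 0 ≤ i := by
  have h1 : ((i, 0) : ℕ × ℕ) ∈ μ ↔ 0 < μ.rowLen i := YoungDiagram.mem_iff_lt_rowLen
  have h2 : ((i, 0) : ℕ × ℕ) ∈ μ ↔ i < μ.colLen 0 := YoungDiagram.mem_iff_lt_colLen
  constructor
  · intro h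
    by_contra hc
    push_neg at hc
    have := h1.1 (h2.2 hc)
    omega
  · intro h
    by_contra hc
    have := h2.1 (h1.2 (Nat.pos_of_ne_zero hc))
    omega

open scoped Classical in
lemma addables_eq (μ : YoungDiagram) :
    μ.addables = ((Finset.range (μ.colLen 0 + 1)).filter
        (fun i => i = 0 ∨ μ.rowLen i < μ.rowLen (i - 1))).image
      (fun i => (i, μ.rowLen i)) := by
  ext ⟨i, j⟩
  simp only [YoungDiagram.addables, Finset.mem_filter, Finset.mem_product, Finset.mem_range,
    Finset.mem_image, isAddable_iff, Prod.ext_iff]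
  constructor
  · rintro ⟨⟨hi, hj⟩, hje, hcorner⟩
    refine ⟨i, ⟨?_, ?_⟩, rfl, hje.symm⟩
    · by_contra hc
      push_neg at hc
      have e1 : μ.rowLen i = 0 := (rowLen_eq_zero_iff μ i).2 (by omega)
      have e2 : μ.rowLen (i - 1) = 0 := (rowLen_eq_zero_iff μ (i - 1)).2 (by omega)
      rcases hcorner with h0 | h0 <;> omega
    · rcases hcorner with h0 | h0
      · exact Or.inl h0
      · right; omega
  · rintro ⟨i', ⟨hi', hcond⟩, rfl, rfl⟩
    have hb1 : i' ≤ μ.cells.card := le_trans (by omega) (colLen_le_card μ 0)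
    have hb2 : μ.rowLen i' ≤ μ.cells.card := rowLen_le_card μ i'
    exact ⟨⟨by omega, by omega⟩, rfl, by rcases hcond with h | h; exact Or.inl h; right; omega⟩

open scoped Classical in
lemma removables_eq (μ : YoungDiagram) :
    μ.removables = ((Finset.range (μ.colLen 0)).filter
        (fun i => μ.rowLen (i + 1) < μ.rowLen i)).image
      (fun i => (i, μ.rowLen i - 1)) := by
  ext ⟨i, j⟩
  simp only [YoungDiagram.removables, Finset.mem_filter, Finset.mem_range, Finset.mem_image,
    isRemovable_iff, YoungDiagram.mem_cells, Prod.ext_iff]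
  constructor
  · rintro ⟨_, hj, hnext⟩
    refine ⟨i, ⟨?_, by omega⟩, rfl, by omega⟩
    by_contra hc
    push_neg at hc
    have := (rowLen_eq_zero_iff μ i).2 hc
    omega
  · rintro ⟨i', ⟨hi', hcond⟩, rfl, rfl⟩
    have hpos : 0 < μ.rowLen i' := by
      by_contra hc
      have := (rowLen_eq_zero_iff μ i').1 (by omega)
      omega
    have hmem : ((i', μ.rowLen i' - 1) : ℕ × ℕ) ∈ μ := YoungDiagram.mem_iff_lt_rowLen.2 (by omega)
    exact ⟨hmem, by omega, by omega⟩

lemma cells_eq_biUnion (μ : YoungDiagram) :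
    μ.cells = (Finset.range (μ.colLen 0)).biUnion
      (fun i => {i} ×ˢ Finset.range (μ.rowLen i)) := by
  ext ⟨a, b⟩
  simp only [Finset.mem_biUnion, Finset.mem_product, Finset.mem_singleton, Finset.mem_range,
    YoungDiagram.mem_cells, YoungDiagram.mem_iff_lt_rowLen]
  constructor
  · intro h
    refine ⟨a, ?_, rfl, h⟩
    by_contra hc
    push_neg at hc
    have := (rowLen_eq_zero_iff μ a).2 hc
    omega
  · rintro ⟨i, _, rfl, h⟩
    exact h


/-- For every Young diagram `λ`, in `ℤ[q₁,q₂]` (with `q₁ = X 0`,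
`q₂ = X 1`):
`1 − (1−q₁)(1−q₂)·Σ_{(i,j)∈λ} q₁^i q₂^j
  = Σ_{(i,j) addable} q₁^i q₂^j − Σ_{(i,j) removable} q₁^{i+1} q₂^{j+1}`. -/
theorem young_diagram_corner_identity (lam : YoungDiagram) :
    (1 : MvPolynomial (Fin 2) ℤ)
      - (1 - X 0) * (1 - X 1) * ∑ c ∈ lam.cells, X 0 ^ c.1 * X 1 ^ c.2
    = (∑ c ∈ lam.addables, X 0 ^ c.1 * X 1 ^ c.2)
      - ∑ c ∈ lam.removables, X 0 ^ (c.1 + 1) * X 1 ^ (c.2 + 1) := by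
  classical
  rw [addables_eq, removables_eq,
    Finset.sum_image (fun x _ y _ h => (Prod.ext_iff.1 h).1),
    Finset.sum_image (fun x _ y _ h => (Prod.ext_iff.1 h).1)]
  set q1 : MvPolynomial (Fin 2) ℤ := X 0 with hq1def
  set q2 : MvPolynomial (Fin 2) ℤ := X 1 with hq2def
  set L : ℕ → ℕ := lam.rowLen with hLdef
  set n : ℕ := lam.colLen 0 with hndef
  have hanti : ∀ i1 i2, i1 ≤ i2 → L i2 ≤ L i1 := fun i1 i2 h => lam.rowLen_anti i1 i2 h
  have hcells : ∑ c ∈ lam.cells, q1 ^ c.1 * q2 ^ c.2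
      = ∑ i ∈ Finset.range n, q1 ^ i * ∑ j ∈ Finset.range (L i), q2 ^ j := by
    rw [cells_eq_biUnion lam, Finset.sum_biUnion]
    · refine Finset.sum_congr rfl fun i _ => ?_
      rw [Finset.sum_product, Finset.sum_singleton, Finset.mul_sum]
    · intro x _ y _ hxy
      simp only [Finset.disjoint_left, Finset.mem_product, Finset.mem_singleton]
      rintro ⟨a, b⟩ ⟨ha, _⟩ ⟨ha', _⟩
      exact hxy (ha ▸ ha')
  have hgeom : ∀ m : ℕ, (1 - q2) * ∑ j ∈ Finset.range m, q2 ^ j = 1 - q2 ^ m := by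
    intro m
    linear_combination -(geom_sum_mul q2 m)
  have hq1geom : (1 - q1) * ∑ i ∈ Finset.range n, q1 ^ i = 1 - q1 ^ n := by
    linear_combination -(geom_sum_mul q1 n)
  have hrem : ∑ i ∈ (Finset.range n).filter (fun i => L (i + 1) < L i),
        q1 ^ (i + 1) * q2 ^ (L i - 1 + 1)
      = ∑ i ∈ (Finset.range n).filter (fun i => L (i + 1) < L i),
        q1 ^ (i + 1) * q2 ^ (L i) := by
    refine Finset.sum_congr rfl fun i hi => ?_
    have := (Finset.mem_filter.1 hi).2
    have hpos : 0 < L i := by omega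
    rw [Nat.sub_add_cancel hpos]
  rw [hcells, hrem]
  have hLn : L n = 0 := (rowLen_eq_zero_iff lam n).2 le_rfl
  have h1 := Finset.sum_filter_add_sum_filter_not (Finset.range (n + 1))
    (fun i => i = 0 ∨ L i < L (i - 1)) (fun i => q1 ^ i * q2 ^ (L i))
  have h2 := Finset.sum_filter_add_sum_filter_not (Finset.range n)
    (fun i => L (i + 1) < L i) (fun i => q1 ^ (i + 1) * q2 ^ (L i))
  have h3 : ∑ i ∈ (Finset.range (n + 1)).filter (fun i => ¬(i = 0 ∨ L i < L (i - 1))),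
        q1 ^ i * q2 ^ (L i)
      = ∑ i ∈ (Finset.range n).filter (fun i => ¬(L (i + 1) < L i)),
        q1 ^ (i + 1) * q2 ^ (L i) := by
    refine Finset.sum_nbij' (fun k => k - 1) (fun k => k + 1) ?_ ?_ ?_ ?_ ?_
    · intro a ha
      simp only [Finset.mem_filter, Finset.mem_range, not_or, not_lt] at ha ⊢
      obtain ⟨ha1, ha2, ha3⟩ := ha
      have hle : L a ≤ L (a - 1) := hanti _ _ (by omega)
      have heq : a - 1 + 1 = a := by omega
      refine ⟨by omega, ?_⟩
      rw [heq]
      omega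
    · intro a ha
      simp only [Finset.mem_filter, Finset.mem_range, not_or, not_lt] at ha ⊢
      obtain ⟨ha1, ha2⟩ := ha
      have hle : L (a + 1) ≤ L a := hanti _ _ (by omega)
      refine ⟨by omega, by omega, ?_⟩
      simpa using ha2
    · intro a ha
      simp only [Finset.mem_filter, Finset.mem_range, not_or] at ha
      show a - 1 + 1 = a
      omega
    · intro a _
      show a + 1 - 1 = a
      omega
    · intro a ha
      simp only [Finset.mem_filter, Finset.mem_range, not_or, not_lt] at ha
      obtain ⟨ha1, ha2, ha3⟩ := ha
      have hle : L a ≤ L (a - 1) := hanti _ _ (by omega)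
      have heq : a - 1 + 1 = a := by omega
      have hL : L (a - 1) = L a := by omega
      show q1 ^ a * q2 ^ (L a) = q1 ^ (a - 1 + 1) * q2 ^ (L (a - 1))
      rw [heq, hL]
  have hsplit : ∑ i ∈ Finset.range n, q1 ^ i * (1 - q2 ^ (L i))
      = (∑ i ∈ Finset.range n, q1 ^ i) - ∑ i ∈ Finset.range n, q1 ^ i * q2 ^ (L i) := by
    rw [← Finset.sum_sub_distrib]
    exact Finset.sum_congr rfl fun i _ => by ring
  have hexp : (1 - q1) * (1 - q2) * ∑ i ∈ Finset.range n, q1 ^ i * ∑ j ∈ Finset.range (L i), q2 ^ j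
      = (1 - q1) * ∑ i ∈ Finset.range n, q1 ^ i * (1 - q2 ^ (L i)) := by
    rw [Finset.mul_sum, Finset.mul_sum]
    refine Finset.sum_congr rfl fun i _ => ?_
    linear_combination (1 - q1) * q1 ^ i * hgeom (L i)
  have hS : ∑ i ∈ Finset.range (n + 1), q1 ^ i * q2 ^ (L i)
      = (∑ i ∈ Finset.range n, q1 ^ i * q2 ^ (L i)) + q1 ^ n := by
    rw [Finset.sum_range_succ, hLn]
    ring
  have hshift : q1 * ∑ i ∈ Finset.range n, q1 ^ i * q2 ^ (L i)
      = ∑ i ∈ Finset.range n, q1 ^ (i + 1) * q2 ^ (L i) := by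
    rw [Finset.mul_sum]
    exact Finset.sum_congr rfl fun i _ => by ring
  linear_combination -hexp - (1 - q1) * hsplit - hq1geom - hS - h1 + h3 + h2 - hshift
end
end

section
/- Let V and W be finite-dimensional vector spaces over a field, let X, Y ∈ End(V), A ∈ Hom(W,V) and B ∈ Hom(V,W), and suppose the quadruple (X,Y,A,B) is semistable, i.e. the only subspace U ⊆ V with X(U) ⊆ U, Y(U) ⊆ U and Im(A) ⊆ U is U = V. Then the linear map Ψ : V ⊕ V ⊕ W → V defined by Ψ(v₁,v₂,w) = X v₂ − Y v₁ + A w is surjective. -/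
/-- If the ADHM quadruple `(X, Y, A, B)` on finite-dimensional vector
spaces `V`, `W` is semistable (the only subspace of `V` invariant under `X` and `Y`
and containing the image of `A` is `V` itself), then the map
`Ψ : V ⊕ V ⊕ W → V`, `Ψ(v₁, v₂, w) = X v₂ − Y v₁ + A w`, is surjective. -/
theorem adhm_semistable_psi_surjective
    {K V W : Type*} [Field K] [AddCommGroup V] [Module K V]
    [AddCommGroup W] [Module K W]
    [FiniteDimensional K V] [FiniteDimensional K W]
    (X Y : V →ₗ[K] V) (A : W →ₗ[K] V) (B : V →ₗ[K] W)
    (hss : ∀ U : Submodule K V,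
      (∀ u ∈ U, X u ∈ U) → (∀ u ∈ U, Y u ∈ U) → LinearMap.range A ≤ U → U = ⊤) :
    Function.Surjective (fun p : V × V × W => X p.2.1 - Y p.1 + A p.2.2) := by
  set U : Submodule K V := LinearMap.range X ⊔ LinearMap.range Y ⊔ LinearMap.range A with hU
  have hX : ∀ u ∈ U, X u ∈ U := fun u _ =>
    (le_sup_left.trans le_sup_left : LinearMap.range X ≤ U) (LinearMap.mem_range_self X u)
  have hY : ∀ u ∈ U, Y u ∈ U := fun u _ =>
    (le_sup_right.trans le_sup_left : LinearMap.range Y ≤ U) (LinearMap.mem_range_self Y u)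
  have hA : LinearMap.range A ≤ U := le_sup_right
  have htop : U = ⊤ := hss U hX hY hA
  intro v
  have hv : v ∈ U := htop ▸ Submodule.mem_top
  rw [hU] at hv
  rcases Submodule.mem_sup.mp hv with ⟨s, hs, a, ⟨w, rfl⟩, rfl⟩
  rcases Submodule.mem_sup.mp hs with ⟨x, ⟨v2, rfl⟩, y, ⟨v1, rfl⟩, rfl⟩
  exact ⟨(-v1, v2, w), by simp⟩
end

section
/- Fix integers d, k ≥ 0, r ≥ 1 and set n = d + k, and work over an arbitrary commutative ring. Let X and Y be n×n matrices whose (i,j) entries vanish whenever j ≤ min(i,k) (rows and columns indexed 1,…,n), let A be an arbitrary n×r matrix, and let B be an r×n matrix whose (m,j) entries vanish for all j ≤ k. Then the matrix C = XY − YX + AB also satisfies C_{ij} = 0 whenever j ≤ min(i,k), and in addition its first k−1 superdiagonal entries vanish: C_{i,i+1} = 0 for all 1 ≤ i ≤ k−1. -/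
/-- Over an arbitrary commutative ring, if the `n×n` matrices `X`, `Y`
(with `n = d + k`, rows and columns indexed `1,…,n`) have vanishing `(i,j)` entry
whenever `j ≤ min(i,k)`, and the `r×n` matrix `B` has vanishing `(m,j)` entry for
`j ≤ k`, then `C = XY − YX + AB` satisfies the same vanishing condition, and moreover
its first `k−1` superdiagonal entries vanish: `C_{i,i+1} = 0` for `1 ≤ i ≤ k−1`. -/
theorem adhm_moment_map_flag_preserving
    {R : Type*} [CommRing R] (d k r : ℕ) (hr : 1 ≤ r)
    (X Y : Matrix (Fin (d + k)) (Fin (d + k)) R)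
    (A : Matrix (Fin (d + k)) (Fin r) R) (B : Matrix (Fin r) (Fin (d + k)) R)
    (hX : ∀ i j : Fin (d + k), (j : ℕ) + 1 ≤ min ((i : ℕ) + 1) k → X i j = 0)
    (hY : ∀ i j : Fin (d + k), (j : ℕ) + 1 ≤ min ((i : ℕ) + 1) k → Y i j = 0)
    (hB : ∀ (m : Fin r) (j : Fin (d + k)), (j : ℕ) + 1 ≤ k → B m j = 0) :
    (∀ i j : Fin (d + k), (j : ℕ) + 1 ≤ min ((i : ℕ) + 1) k →
      (X * Y - Y * X + A * B) i j = 0) ∧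
    (∀ i j : Fin (d + k), (j : ℕ) = (i : ℕ) + 1 → (i : ℕ) + 2 ≤ k →
      (X * Y - Y * X + A * B) i j = 0) := by
  have hAB : ∀ i j : Fin (d + k), (j : ℕ) + 1 ≤ k → (A * B) i j = 0 := by
    intro i j hj
    rw [Matrix.mul_apply]
    exact Finset.sum_eq_zero fun m _ => by rw [hB m j hj, mul_zero]
  have key : ∀ (M N : Matrix (Fin (d + k)) (Fin (d + k)) R),
      (∀ i j : Fin (d + k), (j : ℕ) + 1 ≤ min ((i : ℕ) + 1) k → M i j = 0) →
      (∀ i j : Fin (d + k), (j : ℕ) + 1 ≤ min ((i : ℕ) + 1) k → N i j = 0) →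
      ∀ i j : Fin (d + k), (j : ℕ) + 1 ≤ k → (j : ℕ) ≤ (i : ℕ) + 1 →
      (M * N) i j = 0 := by
    intro M N hM hN i j hjk hji
    rw [Matrix.mul_apply]
    refine Finset.sum_eq_zero fun l _ => ?_
    rcases le_or_gt ((l : ℕ) + 1) (j : ℕ) with h | h
    · rw [hM i l (le_min (h.trans hji) (h.trans (Nat.le_of_succ_le hjk))), zero_mul]
    · rw [hN l j (le_min h hjk), mul_zero]
  constructor
  · intro i j hj
    have hjk := hj.trans (min_le_right _ _)
    have hji : (j : ℕ) ≤ (i : ℕ) + 1 :=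
      Nat.le_of_succ_le (hj.trans (min_le_left _ _))
    rw [Matrix.add_apply, Matrix.sub_apply, key X Y hX hY i j hjk hji,
      key Y X hY hX i j hjk hji, hAB i j hjk]
    ring
  · intro i j hij hik
    have hjk : (j : ℕ) + 1 ≤ k := by omega
    have hji : (j : ℕ) ≤ (i : ℕ) + 1 := by omega
    rw [Matrix.add_apply, Matrix.sub_apply, key X Y hX hY i j hjk hji,
      key Y X hY hX i j hjk hji, hAB i j hjk]
    ring
end
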